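/- Let p be a prime and n a positive integer with gcd(p, 2n) = 1, and let D_n denote the dihedral group of order 2n. Then for every multiplicative Lie algebra structure ⋆̃ on G = ℤ_p × D_n there exists a multiplicative Lie algebra structure ⋆ on D_n such that (h,x) ⋆̃ (k,y) = (0, x ⋆ y) for all (h,x), (k,y) ∈ G. -/

import Mathlib

/-- A multiplicative Lie algebra structure on a group `G`. -/
def IsMulLieAlgebra {G : Type*} [Group G] (star : G → G → G) : Prop :=
  (∀ x, star x x = 1) ∧
  (∀ x y z, star x (y * z) = star x y * (y * star x z * y⁻¹)) ∧
  (∀ x y z, star (x * y) z = (x * star y z * x⁻¹) * star x z) ∧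
  (∀ x y z,
    star (star x y) (y * z * y⁻¹) * star (star y z) (z * x * z⁻¹) *
      star (star z x) (x * y * x⁻¹) = 1) ∧
  (∀ x y z, z * star x y * z⁻¹ = star (z * x * z⁻¹) (z * y * z⁻¹))

/-! In `ℤ_p × D_n` the elements of order dividing `p` are exactly those of `ℤ_p × 1`, so they are
central. Bracketing with a central element `c` turns powers into powers, so `c ⋆ w` has order
dividing `p` and is itself central; hence for `x` of order dividing `2n` the bracket `x ⋆ c` is
killed by both `p` and `2n`, so it is trivial. Inside the cyclic factor, `gⁱ ⋆ gʲ = (g ⋆ g)^(ij) = 1`.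
So `(h, x) ⋆̃ (k, y) = (0, x) ⋆̃ (0, y)`, and the `ℤ_p`-component of the latter is again killed by
`p` and by `2n`, because projecting to the abelian factor makes the bracket multiplicative. -/

theorem eq_one_of_pow_eq_one_of_coprime {M : Type*} [Monoid M] {a : M} {p m : ℕ}
    (hpm : p.Coprime m) (hp : a ^ p = 1) (hm : a ^ m = 1) : a = 1 := by
  simpa [hpm.gcd_eq_one] using pow_gcd_eq_one.mpr ⟨hp, hm⟩

namespace IsMulLieAlgebra

variable {G : Type*} [Group G] {star : G → G → G}

theorem star_one_right (hs : IsMulLieAlgebra star) (x : G) : star x 1 = 1 := by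
  simpa using hs.2.1 x 1 1

theorem star_swap (hs : IsMulLieAlgebra star) (x y : G) : star y x = (star x y)⁻¹ := by
  have h := hs.1 (x * y)
  rw [hs.2.2.1, hs.2.1 y x y, hs.2.1 x x y, hs.1, hs.1] at h
  exact eq_inv_of_mul_eq_one_left (conj_eq_one_iff.mp (by simpa [mul_assoc] using h))

theorem star_one_left (hs : IsMulLieAlgebra star) (z : G) : star 1 z = 1 := by
  rw [star_swap hs, star_one_right hs, inv_one]

theorem star_pow_left_of_mem_center (hs : IsMulLieAlgebra star) {a : G}
    (ha : a ∈ Subgroup.center G) (z : G) (k : ℕ) : star (a ^ k) z = star a z ^ k := by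
  induction k with
  | zero => simpa using star_one_left hs z
  | succ k ih =>
    rw [pow_succ', hs.2.2.1, ← Subgroup.mem_center_iff.mp ha, mul_inv_cancel_right, ih, pow_succ]

theorem star_pow_left_of_forall_star_mem_center (hs : IsMulLieAlgebra star) {a : G}
    (ha : ∀ w, star w a ∈ Subgroup.center G) (z : G) (k : ℕ) :
    star (z ^ k) a = star z a ^ k := by
  induction k with
  | zero => simpa using star_one_left hs a
  | succ k ih =>
    rw [pow_succ', hs.2.2.1, Subgroup.mem_center_iff.mp (ha _) z, mul_inv_cancel_right, ih, pow_succ]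

theorem star_pow_pow_of_mem_center (hs : IsMulLieAlgebra star) {g : G}
    (hg : g ∈ Subgroup.center G) (i j : ℕ) : star (g ^ i) (g ^ j) = 1 := by
  rw [star_pow_left_of_mem_center hs hg, star_swap hs, star_pow_left_of_mem_center hs hg, hs.1]
  simp

theorem star_mul_mul_of_mem_center (hs : IsMulLieAlgebra star) {c d : G}
    (hc : c ∈ Subgroup.center G) (hd : d ∈ Subgroup.center G) (u v : G) :
    star (c * u) (d * v) = star u d * star u v * (star c d * star c v) := by
  rw [hs.2.2.1, ← Subgroup.mem_center_iff.mp hc, mul_inv_cancel_right, hs.2.1 u, hs.2.1 c,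
    ← Subgroup.mem_center_iff.mp hd, mul_inv_cancel_right, ← Subgroup.mem_center_iff.mp hd,
    mul_inv_cancel_right]

theorem star_eq_one_of_coprime (hs : IsMulLieAlgebra star) {p m : ℕ} (hpm : p.Coprime m)
    (hcen : ∀ g : G, g ^ p = 1 → g ∈ Subgroup.center G) {c x : G} (hc : c ^ p = 1)
    (hx : x ^ m = 1) : star x c = 1 := by
  have htors : ∀ w, star w c ^ p = 1 := fun w => by
    rw [star_swap hs c, inv_pow, ← star_pow_left_of_mem_center hs (hcen c hc), hc,
      star_one_left hs, inv_one]
  have hm : star x c ^ m = 1 := by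
    rw [← star_pow_left_of_forall_star_mem_center hs (fun w => hcen _ (htors w)), hx,
      star_one_left hs]
  exact eq_one_of_pow_eq_one_of_coprime hpm (htors x) hm

theorem map_star_pow_left (hs : IsMulLieAlgebra star) {M : Type*} [CommGroup M] (f : G →* M)
    (u v : G) (k : ℕ) : f (star (u ^ k) v) = f (star u v) ^ k := by
  induction k with
  | zero => simp [star_one_left hs]
  | succ k ih =>
    rw [pow_succ', hs.2.2.1, map_mul, map_mul, map_mul, map_inv, ih, mul_inv_cancel_comm, pow_succ]

theorem of_injective {H : Type*} [Group H] (hs : IsMulLieAlgebra star) (ι : H →* G)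
    (hι : Function.Injective ι) {star' : H → H → H}
    (h : ∀ x y, ι (star' x y) = star (ι x) (ι y)) : IsMulLieAlgebra star' :=
  ⟨fun x => hι (by simpa [h] using hs.1 (ι x)),
    fun x y z => hι (by simpa [h] using hs.2.1 (ι x) (ι y) (ι z)),
    fun x y z => hι (by simpa [h] using hs.2.2.1 (ι x) (ι y) (ι z)),
    fun x y z => hι (by simpa [h] using hs.2.2.2.1 (ι x) (ι y) (ι z)),
    fun x y z => hι (by simpa [h] using hs.2.2.2.2 (ι x) (ι y) (ι z))⟩

end IsMulLieAlgebra

section Prod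

variable {A H : Type*} [CommGroup A] [Group H]

theorem Prod.mk_one_mem_center (a : A) : ((a, 1) : A × H) ∈ Subgroup.center (A × H) := by
  rw [Subgroup.center_prod]
  exact ⟨Subgroup.mem_center_iff.mpr fun b => mul_comm b a, Subgroup.one_mem _⟩

theorem Prod.mem_center_of_pow_eq_one {p : ℕ} (hp : p.Coprime (Monoid.exponent H)) {g : A × H}
    (hg : g ^ p = 1) : g ∈ Subgroup.center (A × H) := by
  have h2 : g.2 = 1 := eq_one_of_pow_eq_one_of_coprime hp (by simpa using congrArg Prod.snd hg)
    (Monoid.pow_exponent_eq_one _)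
  simpa [← h2] using Prod.mk_one_mem_center (H := H) g.1

namespace IsMulLieAlgebra

variable {star : A × H → A × H → A × H}

theorem star_one_mk_mk_one_eq_one [Finite A] (hs : IsMulLieAlgebra star)
    (hcop : (Nat.card A).Coprime (Monoid.exponent H)) (x : H) (a : A) :
    star (1, x) (a, 1) = 1 :=
  star_eq_one_of_coprime hs hcop (fun _ => Prod.mem_center_of_pow_eq_one hcop)
    (by simp [pow_card_eq_one']) (by simp [Monoid.pow_exponent_eq_one])

theorem star_mk_one_one_mk_eq_one [Finite A] (hs : IsMulLieAlgebra star)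
    (hcop : (Nat.card A).Coprime (Monoid.exponent H)) (a : A) (x : H) :
    star (a, 1) (1, x) = 1 := by
  rw [star_swap hs, star_one_mk_mk_one_eq_one hs hcop, inv_one]

theorem star_mk_one_mk_one_eq_one [Finite A] [IsCyclic A] (hs : IsMulLieAlgebra star)
    (a b : A) : star (a, 1) (b, 1) = 1 := by
  obtain ⟨g, hg⟩ := IsCyclic.exists_monoid_generator (α := A)
  obtain ⟨i, rfl⟩ := (Submonoid.mem_powers_iff _ _).mp (hg a)
  obtain ⟨j, rfl⟩ := (Submonoid.mem_powers_iff _ _).mp (hg b)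
  simpa using star_pow_pow_of_mem_center hs (Prod.mk_one_mem_center (H := H) g) i j

theorem star_mk_mk [Finite A] [IsCyclic A] (hs : IsMulLieAlgebra star)
    (hcop : (Nat.card A).Coprime (Monoid.exponent H)) (a b : A) (x y : H) :
    star (a, x) (b, y) = star (1, x) (1, y) := by
  have hsplit : ∀ (c : A) (z : H), ((c, z) : A × H) = (c, 1) * (1, z) := by simp
  rw [hsplit a, hsplit b, star_mul_mul_of_mem_center hs (Prod.mk_one_mem_center a)
    (Prod.mk_one_mem_center b), star_one_mk_mk_one_eq_one hs hcop,
    star_mk_one_mk_one_eq_one hs, star_mk_one_one_mk_eq_one hs hcop]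
  simp

theorem fst_star_one_mk_one_mk [Finite A] (hs : IsMulLieAlgebra star)
    (hcop : (Nat.card A).Coprime (Monoid.exponent H)) (x y : H) :
    (star (1, x) (1, y)).1 = 1 := by
  have h := map_star_pow_left hs (MonoidHom.fst A H) (1, x) (1, y) (Monoid.exponent H)
  simp only [Prod.pow_mk, one_pow, Monoid.pow_exponent_eq_one, Prod.mk_one_one, star_one_left hs,
    map_one, MonoidHom.coe_fst] at h
  exact eq_one_of_pow_eq_one_of_coprime hcop pow_card_eq_one' h.symm

theorem exists_star_eq_one_mk [Finite A] [IsCyclic A] (hs : IsMulLieAlgebra star)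
    (hcop : (Nat.card A).Coprime (Monoid.exponent H)) :
    ∃ star' : H → H → H, IsMulLieAlgebra star' ∧
      ∀ (a b : A) (x y : H), star (a, x) (b, y) = (1, star' x y) := by
  have hinr : ∀ x y, star (1, x) (1, y) = (1, (star (1, x) (1, y)).2) :=
    fun x y => Prod.ext (fst_star_one_mk_one_mk hs hcop x y) rfl
  refine ⟨fun x y => (star (1, x) (1, y)).2,
    hs.of_injective (MonoidHom.inr A H) (Prod.mk_right_injective 1) fun x y => (hinr x y).symm,
    fun a b x y => ?_⟩
  rw [star_mk_mk hs hcop, hinr]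

end IsMulLieAlgebra

end Prod

theorem zmod_dihedral_n_general {p n : ℕ}
    (hcop : Nat.Coprime p (2 * n))
    (tstar : (Multiplicative (ZMod p) × DihedralGroup n) →
      (Multiplicative (ZMod p) × DihedralGroup n) →
      (Multiplicative (ZMod p) × DihedralGroup n))
    (htstar : IsMulLieAlgebra tstar) :
    ∃ star : DihedralGroup n → DihedralGroup n → DihedralGroup n,
      IsMulLieAlgebra star ∧
      ∀ (h k : Multiplicative (ZMod p)) (x y : DihedralGroup n),
        tstar (h, x) (k, y) = (Multiplicative.ofAdd (0 : ZMod p), star x y) := by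
  have : NeZero p := ⟨by rintro rfl; rw [Nat.coprime_zero_left] at hcop; omega⟩
  have hcop' : (Nat.card (Multiplicative (ZMod p))).Coprime (Monoid.exponent (DihedralGroup n)) := by
    rw [Nat.card_congr Multiplicative.toAdd, Nat.card_zmod, DihedralGroup.exponent]
    exact hcop.coprime_dvd_right (Nat.lcm_dvd (dvd_mul_left n 2) (dvd_mul_right 2 n))
  simpa using htstar.exists_star_eq_one_mk hcop'

/-- for a prime `p` and `n ≥ 1` with `gcd(p, 2n) = 1`, every
multiplicative Lie algebra structure `⋆̃` on `G = ℤ_p × D_n` comes from a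
multiplicative Lie algebra structure `⋆` on `D_n` via
`(h,x) ⋆̃ (k,y) = (0, x ⋆ y)`. -/
theorem zmod_dihedral_n {p n : ℕ} (hp : p.Prime) (hn : 0 < n)
    (hcop : Nat.Coprime p (2 * n))
    (tstar : (Multiplicative (ZMod p) × DihedralGroup n) →
      (Multiplicative (ZMod p) × DihedralGroup n) →
      (Multiplicative (ZMod p) × DihedralGroup n))
    (htstar : IsMulLieAlgebra tstar) :
    ∃ star : DihedralGroup n → DihedralGroup n → DihedralGroup n,
      IsMulLieAlgebra star ∧
      ∀ (h k : Multiplicative (ZMod p)) (x y : DihedralGroup n),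
        tstar (h, x) (k, y) = (Multiplicative.ofAdd (0 : ZMod p), star x y) :=
  zmod_dihedral_n_general hcop tstar htstar
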